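/- Let (S, A, H, P, μ) be a finite episodic MDP, π⁺ a deterministic target policy, and ε > 0. Suppose L, U : S × A → ℝ satisfy L(s,a) ≤ μ(s,a) ≤ U(s,a) for every (s,a). Then for every step h ∈ {1,…,H}, every state s, and every action a, the contaminated reward of Algorithm 1, r^o_h(s) := L(s, π⁺_h(s)) − ε + (H − h) · min_{s',a'} L(s',a') − (H − h) · max_{s',a'} U(s',a'), satisfies r^o_h(s) ≤ Q^{π⁺}_h(s, π⁺_h(s)) − E_{s' ~ P(s,a)}[V^{π⁺}_{h+1}(s')] − ε, where Q^{π⁺}, V^{π⁺} are computed from the true rewards μ. -/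

import Mathlib

/-!
`V^{π⁺}_{h+1}` accumulates `H - h` rewards, each lying in `[min L, max U]`, so every
expectation of it lies in `[(H - h) min L, (H - h) max U]`. Hence
`Q_h(s, π⁺_h(s)) - E_{P(s,a)} V_{h+1} ≥ μ(s, π⁺_h(s)) + (H - h) min L - (H - h) max U`,
and `L ≤ μ` finishes the bound.
-/

open scoped BigOperators

namespace RLAttack

variable {S A : Type*} [Fintype S] [Fintype A]

/-- Expectation of `f` under a `PMF` on a finite type. -/
noncomputable def expVal (p : PMF S) (f : S → ℝ) : ℝ :=
  ∑ s' : S, (p s').toReal * f s'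

/-- Auxiliary backward-induction value: `n` steps remaining, current step `h`. -/
noncomputable def valAux (r : ℕ → S → A → ℝ) (P : ℕ → S → A → PMF S)
    (π : ℕ → S → A) : ℕ → ℕ → S → ℝ
  | 0, _, _ => 0
  | n + 1, h, s => r h s (π h s) + expVal (P h s (π h s)) (valAux r P π n (h + 1))

/-- Value function `V^π_h(s)` for horizon `H`: `V^π_{H+1} = 0` and
`V^π_h(s) = r_h(s, π_h(s)) + E_{s' ~ P_h(s, π_h(s))}[V^π_{h+1}(s')]`. -/
noncomputable def V (H : ℕ) (r : ℕ → S → A → ℝ) (P : ℕ → S → A → PMF S)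
    (π : ℕ → S → A) (h : ℕ) (s : S) : ℝ :=
  valAux r P π (H + 1 - h) h s

/-- Q-value function `Q^π_h(s,a) = r_h(s,a) + E_{s' ~ P_h(s,a)}[V^π_{h+1}(s')]`. -/
noncomputable def Q (H : ℕ) (r : ℕ → S → A → ℝ) (P : ℕ → S → A → PMF S)
    (π : ℕ → S → A) (h : ℕ) (s : S) (a : A) : ℝ :=
  r h s a + expVal (P h s a) (fun s' => V H r P π (h + 1) s')

section Expectation

variable {S : Type*} [Fintype S]

lemma sum_toReal_pmf (p : PMF S) : ∑ s : S, (p s).toReal = 1 := by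
  rw [← ENNReal.toReal_sum fun s _ => p.apply_ne_top s, ← tsum_fintype (L := .unconditional S),
    p.tsum_coe, ENNReal.toReal_one]

lemma expVal_const (p : PMF S) (c : ℝ) : expVal p (fun _ => c) = c := by
  rw [expVal, ← Finset.sum_mul, sum_toReal_pmf, one_mul]

lemma expVal_mono (p : PMF S) {f g : S → ℝ} (hfg : ∀ s, f s ≤ g s) :
    expVal p f ≤ expVal p g :=
  Finset.sum_le_sum fun s _ => mul_le_mul_of_nonneg_left (hfg s) ENNReal.toReal_nonneg

lemma le_expVal {p : PMF S} {f : S → ℝ} {c : ℝ} (hf : ∀ s, c ≤ f s) : c ≤ expVal p f :=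
  expVal_const p c ▸ expVal_mono p hf

lemma expVal_le {p : PMF S} {f : S → ℝ} {c : ℝ} (hf : ∀ s, f s ≤ c) : expVal p f ≤ c :=
  expVal_const p c ▸ expVal_mono p hf

end Expectation

section ValueBounds

variable {S A : Type*} [Fintype S]
  {r : ℕ → S → A → ℝ} {P : ℕ → S → A → PMF S} {π : ℕ → S → A} {m M : ℝ}

lemma valAux_mem_Icc (hm : ∀ h s a, m ≤ r h s a) (hM : ∀ h s a, r h s a ≤ M) (n h : ℕ) (s : S) :
    valAux r P π n h s ∈ Set.Icc (n * m) (n * M) := by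
  induction n generalizing h s with
  | zero => simp [valAux]
  | succ n ih =>
    have hlo : n * m ≤ expVal (P h s (π h s)) (valAux r P π n (h + 1)) :=
      le_expVal fun s' => (ih (h + 1) s').1
    have hhi : expVal (P h s (π h s)) (valAux r P π n (h + 1)) ≤ n * M :=
      expVal_le fun s' => (ih (h + 1) s').2
    have := hm h s (π h s)
    have := hM h s (π h s)
    constructor <;> simp only [valAux, Nat.cast_succ] <;> linarith

lemma V_succ_mem_Icc (hm : ∀ h s a, m ≤ r h s a) (hM : ∀ h s a, r h s a ≤ M)
    (H h : ℕ) (s : S) :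
    V H r P π (h + 1) s ∈ Set.Icc ((H - h : ℕ) * m) ((H - h : ℕ) * M) := by
  rw [V, Nat.add_sub_add_right]
  exact valAux_mem_Icc hm hM _ _ s

end ValueBounds

theorem statement12_general {S A : Type*} [Fintype S] [Fintype A] [Nonempty S] [Nonempty A]
    (H : ℕ) (P : S → A → PMF S) (μ : S → A → ℝ)
    (πp : ℕ → S → A) (ε : ℝ) (L U : S → A → ℝ)
    (hLU : ∀ s a, L s a ≤ μ s a ∧ μ s a ≤ U s a) :
    ∀ h ∈ Finset.Icc 1 H, ∀ s : S, ∀ a : A,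
      L s (πp h s) - ε
          + ((H - h : ℕ) : ℝ) *
            (Finset.univ : Finset (S × A)).inf' Finset.univ_nonempty
              (fun p => L p.1 p.2)
          - ((H - h : ℕ) : ℝ) *
            (Finset.univ : Finset (S × A)).sup' Finset.univ_nonempty
              (fun p => U p.1 p.2)
        ≤ Q H (fun _ s a => μ s a) (fun _ => P) πp h s (πp h s)
          - expVal (P s a)
              (fun s' => V H (fun _ s a => μ s a) (fun _ => P) πp (h + 1) s')
          - ε := by
  intro h _ s a
  set m := Finset.univ.inf' Finset.univ_nonempty fun p : S × A => L p.1 p.2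
  set M := Finset.univ.sup' Finset.univ_nonempty fun p : S × A => U p.1 p.2
  have hm : ∀ (_ : ℕ) s a, m ≤ μ s a := fun _ s a =>
    (Finset.inf'_le (fun p : S × A => L p.1 p.2) (Finset.mem_univ (s, a))).trans (hLU s a).1
  have hM : ∀ (_ : ℕ) s a, μ s a ≤ M := fun _ s a =>
    (hLU s a).2.trans (Finset.le_sup' (fun p : S × A => U p.1 p.2) (Finset.mem_univ (s, a)))
  have hV := V_succ_mem_Icc (P := fun _ => P) (π := πp) hm hM H h
  have hlo := le_expVal (p := P s (πp h s)) fun s' => (hV s').1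
  have hhi := expVal_le (p := P s a) fun s' => (hV s').2
  have := (hLU s (πp h s)).1
  rw [Q]
  linarith

/-- If `L ≤ μ ≤ U` pointwise, then the contaminated reward of
Algorithm 1, `r^o_h(s) = L(s,π⁺_h(s)) − ε + (H−h)·min L − (H−h)·max U`, is at most
`Q^{π⁺}_h(s,π⁺_h(s)) − E_{s'~P(s,a)}[V^{π⁺}_{h+1}(s')] − ε` for every `h ∈ {1,…,H}`,
state `s` and action `a`. -/
theorem statement12 {S A : Type*} [Fintype S] [Fintype A] [Nonempty S] [Nonempty A]
    (H : ℕ) (hH : 1 ≤ H) (P : S → A → PMF S) (μ : S → A → ℝ)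
    (πp : ℕ → S → A) (ε : ℝ) (hε : 0 < ε) (L U : S → A → ℝ)
    (hLU : ∀ s a, L s a ≤ μ s a ∧ μ s a ≤ U s a) :
    ∀ h ∈ Finset.Icc 1 H, ∀ s : S, ∀ a : A,
      L s (πp h s) - ε
          + ((H - h : ℕ) : ℝ) *
            (Finset.univ : Finset (S × A)).inf' Finset.univ_nonempty
              (fun p => L p.1 p.2)
          - ((H - h : ℕ) : ℝ) *
            (Finset.univ : Finset (S × A)).sup' Finset.univ_nonempty
              (fun p => U p.1 p.2)
        ≤ Q H (fun _ s a => μ s a) (fun _ => P) πp h s (πp h s)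
          - expVal (P s a)
              (fun s' => V H (fun _ s a => μ s a) (fun _ => P) πp (h + 1) s')
          - ε :=
  statement12_general H P μ πp ε L U hLU

end RLAttack
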